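/- arXiv:2405.04091 — 2 statements merged into one kernel-verified Lean document; each statement's English description precedes it below -/
import Mathlib

section
/- Suppose A x* − B|x*| = b, M ∈ R^{m×m} is nonsingular, and for every diagonal matrix D with entries in [−1,1] the matrix A + B D has full column rank. Then for all x ∈ R^n, ‖x − x*‖₂ ≤ (max over such D of ‖(M A + M B D)^†‖₂) · ‖M(A x − B|x| − b)‖₂. -/
open Matrix

/-- The `i`-th largest singular value of a real matrix (0-indexed),
defined as the `i`-th entry of the decreasingly sorted list of square roots
of the eigenvalues of `Aᴴ * A`; `0` if `i` is out of range. -/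
noncomputable def sv {m n : ℕ} (A : Matrix (Fin m) (Fin n) ℝ) (i : ℕ) : ℝ :=
  ((List.ofFn fun j : Fin n =>
      Real.sqrt ((Matrix.isHermitian_conjTranspose_mul_self A).eigenvalues j)).insertionSort
    (· ≥ ·)).getD i 0

/-- Euclidean norm of a vector. -/
noncomputable def vnorm {n : ℕ} (x : Fin n → ℝ) : ℝ := Real.sqrt (∑ i, x i ^ 2)

/-- The Moore–Penrose pseudoinverse of a matrix with full column rank:
`C† = (Cᵀ C)⁻¹ Cᵀ`. -/
noncomputable def pinv {m n : ℕ} (C : Matrix (Fin m) (Fin n) ℝ) : Matrix (Fin n) (Fin m) ℝ :=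
  (Cᵀ * C)⁻¹ * Cᵀ

/-!
A mean-value argument for `x ↦ |x|`: for each `x` there is a diagonal `D` with entries in
`[-1, 1]` such that `(A x - B|x|) - (A x* - B|x*|) = (A + B D)(x - x*)`. Multiplying by `M`,
`x - x*` is recovered from `M (A x - B|x| - b)` by the left inverse `(M A + M B D)†`, whose
spectral norm is its largest singular value. The supremum over `D` is finite because
`D ↦ (M A + M B D)†` is continuous on the compact cube of admissible diagonals.
-/

theorem List.getD_zero_insertionSort_ge_mem_or_eq {α : Type*} [LinearOrder α] (l : List α)
    (d : α) :
    (l.insertionSort (· ≥ ·)).getD 0 d ∈ l ∨ (l.insertionSort (· ≥ ·)).getD 0 d = d := by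
  have hperm := List.perm_insertionSort (· ≥ ·) l
  rcases h : l.insertionSort (· ≥ ·) with _ | ⟨a, t⟩
  · exact .inr rfl
  · rw [h] at hperm
    exact .inl (hperm.mem_iff.mp List.mem_cons_self)

theorem List.le_getD_zero_insertionSort_ge {α : Type*} [LinearOrder α] {l : List α} {a : α}
    (ha : a ∈ l) (d : α) : a ≤ (l.insertionSort (· ≥ ·)).getD 0 d := by
  have hsort := List.pairwise_insertionSort (· ≥ ·) l
  have hmem := (List.perm_insertionSort (· ≥ ·) l).symm.mem_iff.mp ha
  rcases h : l.insertionSort (· ≥ ·) with _ | ⟨b, t⟩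
  · simp [h] at hmem
  · rw [h] at hsort hmem
    rcases List.mem_cons.mp hmem with rfl | hat
    · exact le_rfl
    · exact (List.pairwise_cons.mp hsort).1 a hat

section Pinv

variable {m n : ℕ} {C : Matrix (Fin m) (Fin n) ℝ}

theorem isUnit_det_transpose_mul_self (hC : Function.Injective C.mulVec) :
    IsUnit (Cᵀ * C).det :=
  (isUnit_iff_isUnit_det _).mp <| by
    simpa [conjTranspose_eq_transpose_of_trivial] using (PosDef.conjTranspose_mul_self C hC).isUnit

theorem pinv_mul_self (hC : Function.Injective C.mulVec) : pinv C * C = 1 := by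
  rw [pinv, Matrix.mul_assoc, nonsing_inv_mul _ (isUnit_det_transpose_mul_self hC)]

theorem continuousAt_pinv (hC : Function.Injective C.mulVec) : ContinuousAt pinv C := by
  have hinv : ContinuousAt Inv.inv (Cᵀ * C) :=
    continuousAt_matrix_inv _ <|
      NormedRing.inverse_continuousAt (isUnit_det_transpose_mul_self hC).unit
  have hgram : Continuous fun C : Matrix (Fin m) (Fin n) ℝ => Cᵀ * C :=
    continuous_id.matrix_transpose.matrix_mul continuous_id
  have hprod : Continuous
      fun p : Matrix (Fin n) (Fin n) ℝ × Matrix (Fin n) (Fin m) ℝ => p.1 * p.2 :=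
    continuous_fst.matrix_mul continuous_snd
  exact hprod.continuousAt.comp (f := fun C => ((Cᵀ * C)⁻¹, Cᵀ)) <|
    (hinv.comp (f := fun C => Cᵀ * C) hgram.continuousAt).prodMk
      continuous_id.matrix_transpose.continuousAt

end Pinv

section L2OpNorm

open scoped Matrix.Norms.L2Operator

namespace Matrix

theorem IsHermitian.l2_opNorm_eq_norm_eigenvalues {𝕜 n : Type*} [RCLike 𝕜] [Fintype n]
    [DecidableEq n] {S : Matrix n n 𝕜} (hS : S.IsHermitian) :
    ‖S‖ = ‖hS.eigenvalues‖ := by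
  conv_lhs => rw [hS.spectral_theorem, Unitary.conjStarAlgAut_apply, ← Unitary.coe_star,
    CStarRing.norm_mul_coe_unitary, CStarRing.norm_coe_unitary_mul, l2_opNorm_diagonal]
  simp [Pi.norm_def]

end Matrix

theorem sv_zero_eq_zero_or_exists {m n : ℕ} (P : Matrix (Fin m) (Fin n) ℝ) :
    sv P 0 = 0 ∨ ∃ j, sv P 0 = √((isHermitian_conjTranspose_mul_self P).eigenvalues j) := by
  unfold sv
  rcases List.getD_zero_insertionSort_ge_mem_or_eq _ (0 : ℝ) with h | h
  · obtain ⟨j, hj⟩ := List.mem_ofFn.mp h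
    exact .inr ⟨j, hj.symm⟩
  · exact .inl h

theorem sqrt_eigenvalues_le_sv_zero {m n : ℕ} (P : Matrix (Fin m) (Fin n) ℝ) (j : Fin n) :
    √((isHermitian_conjTranspose_mul_self P).eigenvalues j) ≤ sv P 0 := by
  unfold sv
  apply List.le_getD_zero_insertionSort_ge
  exact List.mem_ofFn.mpr ⟨j, rfl⟩

theorem sv_zero_eq_l2_opNorm {m n : ℕ} (P : Matrix (Fin m) (Fin n) ℝ) : sv P 0 = ‖P‖ := by
  set hS := isHermitian_conjTranspose_mul_self P
  have hnorm : ‖hS.eigenvalues‖ = ‖P‖ ^ 2 := by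
    rw [← hS.l2_opNorm_eq_norm_eigenvalues, l2_opNorm_conjTranspose_mul_self, sq]
  have hsv_nonneg : 0 ≤ sv P 0 := by
    rcases sv_zero_eq_zero_or_exists P with h | ⟨j, h⟩ <;> rw [h]
    exact Real.sqrt_nonneg _
  refine le_antisymm ?_ ?_
  · rcases sv_zero_eq_zero_or_exists P with h | ⟨j, h⟩
    · exact h ▸ norm_nonneg P
    · rw [h, ← Real.sqrt_sq (norm_nonneg P), ← hnorm]
      exact Real.sqrt_le_sqrt ((Real.le_norm_self _).trans (norm_le_pi_norm hS.eigenvalues j))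
  · refine (pow_le_pow_iff_left₀ (norm_nonneg P) hsv_nonneg two_ne_zero).mp ?_
    rw [← hnorm, pi_norm_le_iff_of_nonneg (sq_nonneg _)]
    intro j
    have hj := eigenvalues_conjTranspose_mul_self_nonneg P j
    rw [Real.norm_of_nonneg hj, ← Real.sq_sqrt hj]
    exact pow_le_pow_left₀ (Real.sqrt_nonneg _) (sqrt_eigenvalues_le_sv_zero P j) 2

theorem vnorm_eq_norm_toLp {n : ℕ} (x : Fin n → ℝ) : vnorm x = ‖WithLp.toLp 2 x‖ := by
  simp [vnorm, EuclideanSpace.norm_eq]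

theorem vnorm_mulVec_le {m n : ℕ} (P : Matrix (Fin m) (Fin n) ℝ) (x : Fin n → ℝ) :
    vnorm (P *ᵥ x) ≤ sv P 0 * vnorm x := by
  simpa [vnorm_eq_norm_toLp, sv_zero_eq_l2_opNorm] using P.l2_opNorm_mulVec (WithLp.toLp 2 x)

theorem bddAbove_range_sv_pinv {X : Type*} [TopologicalSpace X] {m n : ℕ} {K : Set X}
    (hK : IsCompact K) {C : X → Matrix (Fin m) (Fin n) ℝ} (hC : Continuous C)
    (hinj : ∀ x ∈ K, Function.Injective (C x).mulVec) :
    BddAbove (Set.range fun x : K => sv (pinv (C x)) 0) := by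
  rw [← Set.image_eq_range (fun x => sv (pinv (C x)) 0)]
  simp_rw [sv_zero_eq_l2_opNorm]
  refine hK.bddAbove_image (continuous_norm.comp_continuousOn fun x hx => ?_)
  exact ((continuousAt_pinv (hinj x hx)).comp hC.continuousAt).continuousWithinAt

end L2OpNorm

theorem isCompact_setOf_forall_abs_le {ι : Type*} [Finite ι] (r : ℝ) :
    IsCompact {x : ι → ℝ | ∀ i, |x i| ≤ r} := by
  simpa only [Set.pi, Set.mem_univ, true_implies, Set.mem_Icc, ← abs_le] using
    isCompact_univ_pi fun _ : ι => isCompact_Icc (a := -r) (b := r)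

theorem exists_abs_sub_abs_eq_mul (a b : ℝ) : ∃ t, |t| ≤ 1 ∧ |a| - |b| = t * (a - b) := by
  rcases eq_or_ne a b with rfl | hab
  · exact ⟨0, by simp⟩
  · have hab' : a - b ≠ 0 := sub_ne_zero.mpr hab
    refine ⟨(|a| - |b|) / (a - b), ?_, (div_mul_cancel₀ _ hab').symm⟩
    rw [abs_div, div_le_one (abs_pos.mpr hab')]
    exact abs_abs_sub_abs_le_abs_sub a b

theorem exists_mulVec_sub_abs_sub_eq {ι κ : Type*} [Fintype κ] [DecidableEq κ]
    (A B : Matrix ι κ ℝ) (x y : κ → ℝ) :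
    ∃ d : κ → ℝ, (∀ j, |d j| ≤ 1) ∧
      (A *ᵥ x - B *ᵥ (fun j => |x j|)) - (A *ᵥ y - B *ᵥ (fun j => |y j|)) =
        (A + B * diagonal d) *ᵥ (x - y) := by
  choose t ht hxy using fun j => exists_abs_sub_abs_eq_mul (x j) (y j)
  refine ⟨-t, fun j => by simpa using ht j, ?_⟩
  have hdiag : diagonal (-t) *ᵥ (x - y) = -((fun j => |x j|) - fun j => |y j|) := by
    ext j
    simp [mulVec_diagonal, hxy]
  rw [add_mulVec, ← mulVec_mulVec, hdiag, mulVec_neg, mulVec_sub, mulVec_sub]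
  abel

/-- Error bound: if `x*` solves the GAVE, `M` is nonsingular and `A + B D` has full column
rank for every diagonal `D` with entries in `[−1,1]`, then
`‖x − x*‖₂ ≤ (max_D ‖(M A + M B D)†‖₂) · ‖M(A x − B|x| − b)‖₂` for all `x`. -/
theorem gave_error_bound_pinv {m n : ℕ} (A B : Matrix (Fin m) (Fin n) ℝ) (b : Fin m → ℝ)
    (M : Matrix (Fin m) (Fin m) ℝ) (hM : IsUnit M) (xs : Fin n → ℝ)
    (hxs : A.mulVec xs - B.mulVec (fun j => |xs j|) = b)
    (hfull : ∀ d : Fin n → ℝ, (∀ j, |d j| ≤ 1) →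
      Function.Injective ((A + B * Matrix.diagonal d).mulVec)) :
    ∀ x : Fin n → ℝ, vnorm (x - xs) ≤
      (⨆ d : {d : Fin n → ℝ // ∀ j, |d j| ≤ 1},
          sv (pinv (M * A + M * B * Matrix.diagonal d.1)) 0) *
        vnorm (M.mulVec (A.mulVec x - B.mulVec (fun j => |x j|) - b)) := by
  have hfac : ∀ d : Fin n → ℝ, M * A + M * B * diagonal d = M * (A + B * diagonal d) :=
    fun d => by rw [Matrix.mul_assoc, Matrix.mul_add]
  have hinj : ∀ d : Fin n → ℝ, (∀ j, |d j| ≤ 1) →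
      Function.Injective (M * A + M * B * diagonal d).mulVec := fun d hd u v huv => by
    rw [hfac, ← mulVec_mulVec, ← mulVec_mulVec] at huv
    exact hfull d hd (mulVec_injective_iff_isUnit.mpr hM huv)
  -- In `ℝ` the `⨆` of an unbounded family is `0`, so `le_ciSup` needs this bound.
  have hbdd := bddAbove_range_sv_pinv (isCompact_setOf_forall_abs_le 1) (by fun_prop) hinj
  intro x
  obtain ⟨d, hd, hmv⟩ := exists_mulVec_sub_abs_sub_eq A B x xs
  set C := M * A + M * B * diagonal d with hC
  have hCx : C *ᵥ (x - xs) = M *ᵥ (A *ᵥ x - B *ᵥ (fun j => |x j|) - b) := by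
    rw [hC, hfac, ← mulVec_mulVec, ← hmv, hxs]
  calc vnorm (x - xs) = vnorm (pinv C *ᵥ (C *ᵥ (x - xs))) := by
        rw [mulVec_mulVec, pinv_mul_self (hinj d hd), one_mulVec]
    _ ≤ sv (pinv C) 0 * vnorm (C *ᵥ (x - xs)) := vnorm_mulVec_le _ _
    _ ≤ _ := by
        rw [hCx]
        exact mul_le_mul_of_nonneg_right (le_ciSup hbdd ⟨d, hd⟩) (Real.sqrt_nonneg _)
end

section
/- Let m ≥ n and suppose σ_n(M A) > ‖M B‖₂ for some nonsingular M. Then any two solutions x₁, x₂ of A x − B|x| = b are equal. -/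
/-!
Subtracting the two equations gives `M A (x₁ - x₂) = M B (|x₁| - |x₂|)`. Diagonalising `Cᴴ C`
shows `σₙ(C) ‖v‖ ≤ ‖C v‖ ≤ σ₁(C) ‖v‖`, and `‖|x₁| - |x₂|‖ ≤ ‖x₁ - x₂‖` componentwise, so
`σₙ(M A) ‖x₁ - x₂‖ ≤ σ₁(M B) ‖x₁ - x₂‖`, which forces `‖x₁ - x₂‖ = 0`.
-/

open Matrix

namespace List

variable {α : Type*} [Preorder α] {l : List α} {a : α}

theorem Pairwise.le_getD_zero (hl : l.Pairwise (· ≥ ·)) (ha : a ∈ l) (d : α) :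
    a ≤ l.getD 0 d := by
  cases l with
  | nil => simp at ha
  | cons b t =>
    rcases mem_cons.mp ha with rfl | ha
    · simp
    · simpa using rel_of_pairwise_cons hl ha

theorem Pairwise.getD_length_sub_one_le (hl : l.Pairwise (· ≥ ·)) (ha : a ∈ l) (d : α) :
    l.getD (l.length - 1) d ≤ a := by
  obtain ⟨i, rfl⟩ := get_of_mem ha
  have hlast : l.length - 1 < l.length := by have := i.isLt; omega
  rw [getD_eq_getElem l d hlast]
  exact hl.rel_get_of_le (a := i) (b := ⟨_, hlast⟩) (Fin.mk_le_mk.mpr (by omega))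

end List

namespace Matrix

variable {ι κ R : Type*} [Fintype ι] [Fintype κ] [CommSemiring R]

theorem mulVec_dotProduct_mulVec (U : Matrix κ ι R) (B : Matrix κ κ R) (v w : ι → R) :
    (U *ᵥ v) ⬝ᵥ (B *ᵥ (U *ᵥ w)) = v ⬝ᵥ ((Uᵀ * B * U) *ᵥ w) := by
  rw [← mulVec_mulVec, ← mulVec_mulVec, dotProduct_transpose_mulVec, dotProduct_comm]

variable [DecidableEq ι]

theorem IsHermitian.exists_dotProduct_mulVec_eq_sum {A : Matrix ι ι ℝ} (hA : A.IsHermitian)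
    (x : ι → ℝ) :
    ∃ c : ι → ℝ, c ⬝ᵥ c = x ⬝ᵥ x ∧ x ⬝ᵥ (A *ᵥ x) = ∑ j, hA.eigenvalues j * c j ^ 2 := by
  set U : Matrix ι ι ℝ := (hA.eigenvectorUnitary : Matrix ι ι ℝ)
  have hUt : Uᵀ = star U := (conjTranspose_eq_transpose_of_trivial U).symm
  have hUU : Uᵀ * U = 1 := hUt ▸ Unitary.star_mul_self_of_mem hA.eigenvectorUnitary.2
  have hdiag : Uᵀ * A * U = diagonal hA.eigenvalues := by
    rw [hUt, ← Unitary.conjStarAlgAut_star_apply (S := ℝ)]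
    exact hA.conjStarAlgAut_star_eigenvectorUnitary
  obtain ⟨c, rfl⟩ : ∃ c, U *ᵥ c = x :=
    ⟨star U *ᵥ x, by rw [mulVec_mulVec, Unitary.mul_star_self_of_mem hA.eigenvectorUnitary.2,
      one_mulVec]⟩
  refine ⟨c, ?_, ?_⟩
  · nth_rw 2 [← one_mulVec (U *ᵥ c)]
    rw [mulVec_dotProduct_mulVec, mul_one, hUU, one_mulVec]
  · rw [mulVec_dotProduct_mulVec, hdiag]
    simp only [dotProduct, mulVec_diagonal]
    exact Finset.sum_congr rfl fun j _ => by ring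

theorem IsHermitian.mul_dotProduct_self_le {A : Matrix ι ι ℝ} (hA : A.IsHermitian) {r : ℝ}
    (hr : ∀ j, r ≤ hA.eigenvalues j) (x : ι → ℝ) : r * (x ⬝ᵥ x) ≤ x ⬝ᵥ (A *ᵥ x) := by
  obtain ⟨c, hc, hAx⟩ := hA.exists_dotProduct_mulVec_eq_sum x
  rw [hAx, ← hc, dotProduct, Finset.mul_sum]
  exact Finset.sum_le_sum fun j _ => by
    rw [← sq]; exact mul_le_mul_of_nonneg_right (hr j) (sq_nonneg _)

theorem IsHermitian.dotProduct_mulVec_le {A : Matrix ι ι ℝ} (hA : A.IsHermitian) {r : ℝ}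
    (hr : ∀ j, hA.eigenvalues j ≤ r) (x : ι → ℝ) : x ⬝ᵥ (A *ᵥ x) ≤ r * (x ⬝ᵥ x) := by
  obtain ⟨c, hc, hAx⟩ := hA.exists_dotProduct_mulVec_eq_sum x
  rw [hAx, ← hc, dotProduct, Finset.mul_sum]
  exact Finset.sum_le_sum fun j _ => by
    rw [← sq]; exact mul_le_mul_of_nonneg_right (hr j) (sq_nonneg _)

end Matrix

section SingularValues

variable {m n : ℕ} (C : Matrix (Fin m) (Fin n) ℝ)

noncomputable def sortedSingularValues : List ℝ :=
  (List.ofFn fun j : Fin n =>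
      √((isHermitian_conjTranspose_mul_self C).eigenvalues j)).insertionSort (· ≥ ·)

theorem sv_eq_getD (i : ℕ) : sv C i = (sortedSingularValues C).getD i 0 := rfl

theorem sortedSingularValues_pairwise : (sortedSingularValues C).Pairwise (· ≥ ·) :=
  List.pairwise_insertionSort _ _

theorem length_sortedSingularValues : (sortedSingularValues C).length = n := by
  rw [sortedSingularValues, List.length_insertionSort, List.length_ofFn]

theorem mem_sortedSingularValues {a : ℝ} :
    a ∈ sortedSingularValues C ↔
      ∃ j, √((isHermitian_conjTranspose_mul_self C).eigenvalues j) = a := by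
  rw [sortedSingularValues, (List.perm_insertionSort _ _).mem_iff, List.mem_ofFn]

theorem sv_nonneg (i : ℕ) : 0 ≤ sv C i := by
  rw [sv_eq_getD, List.getD_eq_getElem?_getD]
  cases h : (sortedSingularValues C)[i]? with
  | none => rfl
  | some a =>
    obtain ⟨j, rfl⟩ := (mem_sortedSingularValues C).mp (List.mem_of_getElem? h)
    exact Real.sqrt_nonneg _

theorem sv_sq_le_eigenvalues (j : Fin n) :
    sv C (n - 1) ^ 2 ≤ (isHermitian_conjTranspose_mul_self C).eigenvalues j := by
  have hle := (sortedSingularValues_pairwise C).getD_length_sub_one_le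
    ((mem_sortedSingularValues C).mpr ⟨j, rfl⟩) 0
  rw [length_sortedSingularValues, ← sv_eq_getD] at hle
  exact (Real.le_sqrt (sv_nonneg C _)
    ((posSemidef_conjTranspose_mul_self C).eigenvalues_nonneg j)).mp hle

theorem eigenvalues_le_sv_sq (j : Fin n) :
    (isHermitian_conjTranspose_mul_self C).eigenvalues j ≤ sv C 0 ^ 2 :=
  (Real.sqrt_le_left (sv_nonneg C 0)).mp <|
    (sortedSingularValues_pairwise C).le_getD_zero ((mem_sortedSingularValues C).mpr ⟨j, rfl⟩) 0

end SingularValues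

section EuclideanNorm

variable {n : ℕ}

theorem vnorm_nonneg (x : Fin n → ℝ) : 0 ≤ vnorm x := Real.sqrt_nonneg _

theorem sq_vnorm (x : Fin n → ℝ) : vnorm x ^ 2 = x ⬝ᵥ x := by
  rw [vnorm, Real.sq_sqrt (Finset.sum_nonneg fun i _ => sq_nonneg (x i))]
  simp only [dotProduct, sq]

theorem vnorm_eq_zero {x : Fin n → ℝ} : vnorm x = 0 ↔ x = 0 := by
  rw [← pow_eq_zero_iff two_ne_zero, sq_vnorm, dotProduct_self_eq_zero]

theorem vnorm_abs_sub_abs_le (x y : Fin n → ℝ) :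
    vnorm ((fun j => |x j|) - (fun j => |y j|)) ≤ vnorm (x - y) :=
  Real.sqrt_le_sqrt <| Finset.sum_le_sum fun j _ =>
    sq_le_sq.mpr (abs_abs_sub_abs_le_abs_sub (x j) (y j))

theorem dotProduct_conjTranspose_mul_self_mulVec {m : ℕ} (C : Matrix (Fin m) (Fin n) ℝ)
    (x : Fin n → ℝ) : x ⬝ᵥ ((Cᴴ * C) *ᵥ x) = vnorm (C *ᵥ x) ^ 2 := by
  rw [sq_vnorm]
  nth_rw 2 [← one_mulVec (C *ᵥ x)]
  rw [mulVec_dotProduct_mulVec, Matrix.mul_one, conjTranspose_eq_transpose_of_trivial]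

theorem sv_mul_vnorm_le_vnorm_mulVec {m : ℕ} (C : Matrix (Fin m) (Fin n) ℝ) (x : Fin n → ℝ) :
    sv C (n - 1) * vnorm x ≤ vnorm (C *ᵥ x) := by
  have h := (isHermitian_conjTranspose_mul_self C).mul_dotProduct_self_le
    (sv_sq_le_eigenvalues C) x
  rw [dotProduct_conjTranspose_mul_self_mulVec, ← sq_vnorm, ← mul_pow] at h
  exact le_of_pow_le_pow_left₀ two_ne_zero (vnorm_nonneg _) h

theorem vnorm_mulVec_le_sv_mul_vnorm {m : ℕ} (C : Matrix (Fin m) (Fin n) ℝ) (x : Fin n → ℝ) :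
    vnorm (C *ᵥ x) ≤ sv C 0 * vnorm x := by
  have h := (isHermitian_conjTranspose_mul_self C).dotProduct_mulVec_le
    (eigenvalues_le_sv_sq C) x
  rw [dotProduct_conjTranspose_mul_self_mulVec, ← sq_vnorm, ← mul_pow] at h
  exact le_of_pow_le_pow_left₀ two_ne_zero (mul_nonneg (sv_nonneg C 0) (vnorm_nonneg x)) h

end EuclideanNorm

theorem gave_solutions_eq_general {m n : ℕ} (A B : Matrix (Fin m) (Fin n) ℝ)
    (M : Matrix (Fin m) (Fin m) ℝ)
    (h : sv (M * A) (n - 1) > sv (M * B) 0) (b : Fin m → ℝ) (x₁ x₂ : Fin n → ℝ)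
    (h₁ : A.mulVec x₁ - B.mulVec (fun j => |x₁ j|) = b)
    (h₂ : A.mulVec x₂ - B.mulVec (fun j => |x₂ j|) = b) : x₁ = x₂ := by
  set y : Fin n → ℝ := (fun j => |x₁ j|) - (fun j => |x₂ j|)
  have hdiff : A *ᵥ (x₁ - x₂) = B *ᵥ y := by
    rw [mulVec_sub, mulVec_sub]
    exact sub_eq_sub_iff_sub_eq_sub.mp (h₁.trans h₂.symm)
  have hle : sv (M * A) (n - 1) * vnorm (x₁ - x₂) ≤ sv (M * B) 0 * vnorm (x₁ - x₂) :=
    calc sv (M * A) (n - 1) * vnorm (x₁ - x₂)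
        ≤ vnorm ((M * A) *ᵥ (x₁ - x₂)) := sv_mul_vnorm_le_vnorm_mulVec _ _
      _ = vnorm ((M * B) *ᵥ y) := by rw [← mulVec_mulVec, ← mulVec_mulVec, hdiff]
      _ ≤ sv (M * B) 0 * vnorm y := vnorm_mulVec_le_sv_mul_vnorm _ _
      _ ≤ sv (M * B) 0 * vnorm (x₁ - x₂) :=
        mul_le_mul_of_nonneg_left (vnorm_abs_sub_abs_le x₁ x₂) (sv_nonneg _ _)
  have hzero : vnorm (x₁ - x₂) = 0 := by nlinarith [vnorm_nonneg (x₁ - x₂)]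
  exact sub_eq_zero.mp (vnorm_eq_zero.mp hzero)

/-- If `m ≥ n` and `σ_n(M A) > ‖M B‖₂` for some nonsingular `M`, then any two solutions of
`A x − B|x| = b` coincide. -/
theorem gave_solutions_eq {m n : ℕ} (hmn : n ≤ m) (A B : Matrix (Fin m) (Fin n) ℝ)
    (M : Matrix (Fin m) (Fin m) ℝ) (hM : IsUnit M)
    (h : sv (M * A) (n - 1) > sv (M * B) 0) (b : Fin m → ℝ) (x₁ x₂ : Fin n → ℝ)
    (h₁ : A.mulVec x₁ - B.mulVec (fun j => |x₁ j|) = b)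
    (h₂ : A.mulVec x₂ - B.mulVec (fun j => |x₂ j|) = b) : x₁ = x₂ :=
  gave_solutions_eq_general A B M h b x₁ x₂ h₁ h₂
end
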